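/- arXiv:math/0301087 — 3 statements merged into one kernel-verified Lean document; each statement's English description precedes it below -/
import Mathlib

section
/- Let X be a proper geodesic δ-hyperbolic space with basepoint o, and let ξ, ζ be two horofunction classes lying over the same Gromov boundary point α (i.e. π(ξ) = π(ζ) = α for the natural projection π from the horoboundary to the Gromov boundary). Then |b_ξ(x) − b_ζ(x)| ≤ 8δ for all x ∈ X. -/
open Filter

/-- The Gromov product of `x` and `y` with respect to the basepoint `o`. -/
noncomputable def gromovProd {X : Type*} [MetricSpace X] (o x y : X) : ℝ :=
  (dist x o + dist y o - dist x y) / 2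

lemma gromovProd_comm {X : Type*} [MetricSpace X] (o x y : X) :
    gromovProd o x y = gromovProd o y x := by
  simp [gromovProd, dist_comm]; ring

lemma aux_le {X : Type*} [MetricSpace X] (o x : X) (δ : ℝ)
    (hhyp : ∀ x y z : X, min (gromovProd o x z) (gromovProd o z y) - δ ≤ gromovProd o x y)
    (p q : ℕ → X)
    (hpq : ∀ C : ℝ, ∃ N : ℕ, ∀ i ≥ N, ∀ j ≥ N, C ≤ gromovProd o (p i) (q j))
    (L M : ℝ)
    (hL : Tendsto (fun i => gromovProd o (p i) x) atTop (nhds L))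
    (hM : Tendsto (fun j => gromovProd o (q j) x) atTop (nhds M)) :
    M - δ ≤ L := by
  have key : ∀ ε > (0:ℝ), M - δ ≤ L + ε := by
    intro ε hε
    obtain ⟨N2, hN2⟩ := hpq M
    have hMev : ∀ᶠ j in atTop, M - ε ≤ gromovProd o (q j) x := by
      have := hM.eventually (eventually_ge_nhds (show M - ε < M by linarith))
      exact this
    obtain ⟨N1, hN1⟩ := eventually_atTop.mp hMev
    set j := max N1 N2 with hj
    have hLge : ∀ᶠ i in atTop, M - ε - δ ≤ gromovProd o (p i) x := by
      filter_upwards [eventually_ge_atTop N2] with i hi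
      have h1 : M ≤ gromovProd o (p i) (q j) := hN2 i hi j (le_max_right _ _)
      have h2 : M - ε ≤ gromovProd o (q j) x := hN1 j (le_max_left _ _)
      have h3 := hhyp (p i) x (q j)
      have : M - ε ≤ min (gromovProd o (p i) (q j)) (gromovProd o (q j) x) :=
        le_min (by linarith) h2
      linarith
    have : M - ε - δ ≤ L := ge_of_tendsto hL hLge
    linarith
  linarith [le_of_forall_pos_le_add key]

/-- Let `X` be a proper geodesic `δ`-hyperbolic space with basepoint `o`, and let `b = b_ξ` and
`c = b_ζ` be two normalized horofunctions, limits of `d(p i, ·) − d(p i, o)` and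
`d(q i, ·) − d(q i, o)` for sequences `p`, `q` converging to the same Gromov boundary point `α`
(i.e. `(p i | p j) → ∞`, `(q i | q j) → ∞` and `(p i | q j) → ∞`).  Then
`|b_ξ(x) − b_ζ(x)| ≤ 8δ` for all `x ∈ X`. -/
theorem horofunctions_same_boundary_point {X : Type*} [MetricSpace X] [ProperSpace X]
    (o : X) (δ : ℝ) (hδ : 0 ≤ δ)
    (hhyp : ∀ x y z : X, min (gromovProd o x z) (gromovProd o z y) - δ ≤ gromovProd o x y)
    (hgeo : ∀ x y : X, ∃ m : X, dist x m = dist x y / 2 ∧ dist m y = dist x y / 2)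
    (p q : ℕ → X)
    (hpp : ∀ C : ℝ, ∃ N : ℕ, ∀ i ≥ N, ∀ j ≥ N, C ≤ gromovProd o (p i) (p j))
    (hqq : ∀ C : ℝ, ∃ N : ℕ, ∀ i ≥ N, ∀ j ≥ N, C ≤ gromovProd o (q i) (q j))
    (hpq : ∀ C : ℝ, ∃ N : ℕ, ∀ i ≥ N, ∀ j ≥ N, C ≤ gromovProd o (p i) (q j))
    (b c : X → ℝ)
    (hb : ∀ x : X, Tendsto (fun i => dist (p i) x - dist (p i) o) atTop (nhds (b x)))
    (hc : ∀ x : X, Tendsto (fun i => dist (q i) x - dist (q i) o) atTop (nhds (c x))) :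
    ∀ x : X, |b x - c x| ≤ 8 * δ := by
  intro x
  have hqp : ∀ C : ℝ, ∃ N : ℕ, ∀ i ≥ N, ∀ j ≥ N, C ≤ gromovProd o (q i) (p j) := by
    intro C
    obtain ⟨N, hN⟩ := hpq C
    exact ⟨N, fun i hi j hj => gromovProd_comm o (p j) (q i) ▸ hN j hj i hi⟩
  have hL : Tendsto (fun i => gromovProd o (p i) x) atTop (nhds ((dist x o - b x) / 2)) := by
    have := ((hb x).const_sub (dist x o)).div_const 2
    convert this using 2 with i
    simp [gromovProd]; ring
  have hM : Tendsto (fun j => gromovProd o (q j) x) atTop (nhds ((dist x o - c x) / 2)) := by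
    have := ((hc x).const_sub (dist x o)).div_const 2
    convert this using 2 with i
    simp [gromovProd]; ring
  have h1 := aux_le o x δ hhyp p q hpq _ _ hL hM
  have h2 := aux_le o x δ hhyp q p hqp _ _ hM hL
  rw [abs_le]
  constructor <;> linarith
end

section
/- Let λ be an atomless positive Radon measure on ∂ℍⁿ with 0 < λ(∂ℍⁿ) < ∞. Then the function B_λ(p) = ∫_{∂ℍⁿ} B_θ(p) dλ(θ) is proper, strictly convex (its Hessian is positive definite at every point), and has a unique critical point in ℍⁿ, which is its unique global minimum. -/
open MeasureTheory

noncomputable section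

/-- The Minkowski bilinear form of signature `(1, n)` on `ℝ^{n+1}`. -/
def mink {n : ℕ} (x y : Fin (n + 1) → ℝ) : ℝ :=
  -(x 0 * y 0) + ∑ i : Fin n, x i.succ * y i.succ

/-- Hyperbolic geodesic in the hyperboloid model through `p` with initial velocity `v`. -/
def hypGeod {n : ℕ} (p v : Fin (n + 1) → ℝ) (t : ℝ) : Fin (n + 1) → ℝ :=
  Real.cosh (Real.sqrt (mink v v) * t) • p +
    (Real.sinh (Real.sqrt (mink v v) * t) / Real.sqrt (mink v v)) • v

/-- The boundary sphere `∂ℍⁿ ≅ S^{n-1}`: a unit vector `θ` corresponds to the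
future-pointing null vector `(1, θ)`. -/
def nullVec {n : ℕ} (θ : EuclideanSpace ℝ (Fin n)) : Fin (n + 1) → ℝ :=
  Fin.cons 1 fun i => θ i

/-- The Busemann function of the boundary point `θ ∈ ∂ℍⁿ = S^{n-1}`, normalized to vanish at
the basepoint `o = (1,0,…,0)`: `B_θ(q) = log (−⟪q, (1,θ)⟫)`. -/
def busemannSph {n : ℕ} (θ : EuclideanSpace ℝ (Fin n)) (q : Fin (n + 1) → ℝ) : ℝ :=
  Real.log (-(mink q (nullVec θ)))

/-- The average `B_λ(q) = ∫_{∂ℍⁿ} B_θ(q) dλ(θ)` of Busemann functions against a measure `λ`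
on the boundary sphere. -/
def busemannAvg {n : ℕ} (lam : Measure (Metric.sphere (0 : EuclideanSpace ℝ (Fin n)) 1))
    (q : Fin (n + 1) → ℝ) : ℝ :=
  ∫ θ, busemannSph (θ : EuclideanSpace ℝ (Fin n)) q ∂lam

/-!
Along a geodesic `γ t = cosh (s t) • p + sinh (s t) / s • v` of `ℍⁿ` (with `⟪v, v⟫ = s²`), the
function `exp B_θ (γ t) = -⟪γ t, (1, θ)⟫` is `G t = a cosh (s t) + b sinh (s t) / s` with
`a = exp B_θ p` and `b = exp B_θ v`, and the reverse Cauchy–Schwarz inequality for the null vector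
`(1, θ)` gives `|b| ≤ s a`. Hence `(log G)'' = (s² a² - b²) / G² ≥ 0`, with equality only when
`(1, θ)` lies in the plane of `p` and `v`, i.e. when `θ` is one of the two endpoints of `γ`. Since
`λ` has no atoms, differentiating twice under the integral gives `B_λ'' > 0` along every geodesic.

For properness, let `r = ‖spatial q‖` be large. Then `exp B_θ q ≥ 1 / (3 r)` for every `θ`, and
`exp B_θ q ≥ r ρ² / 2` off the `ρ`-cap around the direction of `spatial q`. An atomless finite
measure on the compact sphere gives uniformly small mass to small caps, so
`B_λ q ≥ λ(∂ℍⁿ) / 2 · log r - C`.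

So a minimum exists and is a critical point, and strict convexity along the geodesic joining two
points makes every critical point the strict global minimum.
-/

open Real
open scoped RealInnerProductSpace

lemma MeasureTheory.exists_pos_forall_measure_ball_lt {X : Type*} [MetricSpace X]
    [CompactSpace X] [MeasurableSpace X] [OpensMeasurableSpace X] (μ : Measure X)
    [IsFiniteMeasure μ] [NullSingletonClass μ] {ε : ENNReal} (hε : 0 < ε) :
    ∃ r > 0, ∀ x, μ (Metric.ball x r) < ε := by
  have hsmall x : ∃ r > 0, μ (Metric.ball x r) < ε := by
    have := tendsto_measure_thickening_of_isClosed (μ := μ) (s := {x})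
      ⟨1, one_pos, measure_ne_top _ _⟩ isClosed_singleton
    simp only [Metric.thickening_singleton, measure_singleton] at this
    obtain ⟨r, hr, hr0⟩ := ((this.eventually (gt_mem_nhds hε)).and self_mem_nhdsWithin).exists
    exact ⟨r, hr0, hr⟩
  choose r hr hμ using hsmall
  obtain ⟨δ, hδ, hball⟩ := lebesgue_number_lemma_of_metric isCompact_univ
    (c := fun x => Metric.ball x (r x)) (fun _ => Metric.isOpen_ball)
    fun x _ => Set.mem_iUnion.2 ⟨x, Metric.mem_ball_self (hr x)⟩
  refine ⟨δ, hδ, fun y => ?_⟩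
  obtain ⟨x, hx⟩ := hball y trivial
  exact (measure_mono hx).trans_lt (hμ x)

lemma MeasureTheory.mul_measureReal_add_le_integral {X : Type*} [MeasurableSpace X]
    {μ : Measure X} [IsFiniteMeasure μ] {f : X → ℝ} (hf : Integrable f μ) {s : Set X}
    (hs : MeasurableSet s) {α β : ℝ} (hα : ∀ x ∈ s, α ≤ f x) (hβ : ∀ x ∈ sᶜ, β ≤ f x) :
    α * μ.real s + β * μ.real sᶜ ≤ ∫ x, f x ∂μ := by
  rw [← integral_add_compl hs hf, mul_comm α, mul_comm β]
  exact add_le_add (setIntegral_ge_of_const_le hs (measure_ne_top _ _) hα hf.integrableOn)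
    (setIntegral_ge_of_const_le hs.compl (measure_ne_top _ _) hβ hf.integrableOn)

lemma lt_of_strictMono_deriv {f : ℝ → ℝ} (hf : Differentiable ℝ f)
    (hf' : StrictMono (deriv f)) (h0 : deriv f 0 = 0) {t : ℝ} (ht : 0 < t) : f 0 < f t :=
  strictMonoOn_of_deriv_pos (convex_Icc 0 t) hf.continuous.continuousOn
    (fun x hx => by rw [interior_Icc] at hx; exact h0 ▸ hf' hx.1)
    ⟨le_rfl, ht.le⟩ ⟨ht.le, le_rfl⟩ ht

namespace Busemann

variable {n : ℕ} {p q v w : Fin (n + 1) → ℝ}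

section Minkowski

def spatial (q : Fin (n + 1) → ℝ) : EuclideanSpace ℝ (Fin n) := WithLp.toLp 2 (Fin.tail q)

@[simp]
lemma spatial_apply (q : Fin (n + 1) → ℝ) (i : Fin n) : spatial q i = q i.succ := rfl

lemma continuous_spatial : Continuous (spatial : (Fin (n + 1) → ℝ) → EuclideanSpace ℝ (Fin n)) :=
  (PiLp.continuous_toLp 2 _).comp (continuous_pi fun i => continuous_apply i.succ)

lemma mink_comm (x y : Fin (n + 1) → ℝ) : mink x y = mink y x := by
  simp only [mink, mul_comm]

lemma mink_smul_add_smul_left (a b : ℝ) (x y z : Fin (n + 1) → ℝ) :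
    mink (a • x + b • y) z = a * mink x z + b * mink y z := by
  simp only [mink, Pi.add_apply, Pi.smul_apply, smul_eq_mul, add_mul, mul_assoc,
    Finset.sum_add_distrib, ← Finset.mul_sum]
  ring

lemma mink_smul_add_smul_right (a b : ℝ) (x y z : Fin (n + 1) → ℝ) :
    mink z (a • x + b • y) = a * mink z x + b * mink z y := by
  rw [mink_comm, mink_smul_add_smul_left, mink_comm x, mink_comm y]

lemma mink_eq_inner (x y : Fin (n + 1) → ℝ) :
    mink x y = ⟪spatial x, spatial y⟫ - x 0 * y 0 := by
  simp only [mink, PiLp.inner_apply, spatial_apply, RCLike.inner_apply, conj_trivial, mul_comm]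
  ring

lemma mink_self (x : Fin (n + 1) → ℝ) : mink x x = ‖spatial x‖ ^ 2 - x 0 ^ 2 := by
  rw [mink_eq_inner, real_inner_self_eq_norm_sq]; ring

lemma continuous_mink_self : Continuous fun x : Fin (n + 1) → ℝ => mink x x := by
  unfold mink; fun_prop

lemma eq_zero_of_apply_zero_of_spatial (h0 : v 0 = 0) (hs : spatial v = 0) : v = 0 := by
  funext i
  refine Fin.cases h0 (fun j => ?_) i
  simpa using congrArg (· j) hs

def hyperboloid (n : ℕ) : Set (Fin (n + 1) → ℝ) := {p | mink p p = -1 ∧ 0 < p 0}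

lemma apply_zero_sq_of_mem_hyperboloid (hp : p ∈ hyperboloid n) :
    p 0 ^ 2 = 1 + ‖spatial p‖ ^ 2 := by
  linarith [mink_self p, hp.1]

lemma norm_spatial_lt (hp : p ∈ hyperboloid n) : ‖spatial p‖ < p 0 := by
  nlinarith [apply_zero_sq_of_mem_hyperboloid hp, norm_nonneg (spatial p), hp.2]

lemma isClosed_hyperboloid : IsClosed (hyperboloid n) := by
  have : hyperboloid n = {p | mink p p = -1} ∩ {p | 0 ≤ p 0} := by
    ext p
    refine ⟨fun hp => ⟨hp.1, hp.2.le⟩, fun ⟨h1, h2⟩ => ⟨h1, h2.lt_of_ne fun h0 => ?_⟩⟩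
    have h1 : mink p p = -1 := h1
    nlinarith [mink_self p, norm_nonneg (spatial p)]
  rw [this]
  exact (isClosed_eq continuous_mink_self continuous_const).inter
    (isClosed_le continuous_const (continuous_apply 0))

lemma norm_le_one_add_norm_spatial (hq : q ∈ hyperboloid n) : ‖q‖ ≤ 1 + ‖spatial q‖ := by
  have hq0 : q 0 ≤ 1 + ‖spatial q‖ := by
    nlinarith [apply_zero_sq_of_mem_hyperboloid hq, norm_nonneg (spatial q)]
  refine (pi_norm_le_iff_of_nonneg (by positivity)).2 fun i => Fin.cases ?_ (fun j => ?_) i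
  · rwa [Real.norm_of_nonneg hq.2.le]
  · calc ‖q j.succ‖ = ‖spatial q j‖ := rfl
      _ ≤ ‖spatial q‖ := PiLp.norm_apply_le _ _
      _ ≤ 1 + ‖spatial q‖ := by linarith

lemma neg_mink_pos (hp : p ∈ hyperboloid n) (hq : q ∈ hyperboloid n) : 0 < -mink p q := by
  have := real_inner_le_norm (spatial p) (spatial q)
  have := mul_lt_mul'' (norm_spatial_lt hp) (norm_spatial_lt hq) (norm_nonneg _) (norm_nonneg _)
  linarith [mink_eq_inner p q]

lemma mink_self_pos (hp : p ∈ hyperboloid n) (hv : mink p v = 0) (hv0 : v ≠ 0) :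
    0 < mink v v := by
  have hinner : v 0 * p 0 = ⟪spatial p, spatial v⟫ := by linarith [mink_eq_inner p v]
  have hcs : |v 0| * p 0 ≤ ‖spatial p‖ * ‖spatial v‖ := by
    rw [← abs_of_pos hp.2, ← abs_mul, hinner]
    exact abs_real_inner_le_norm _ _
  have hsv : 0 < ‖spatial v‖ := by
    refine norm_pos_iff.2 fun hs => hv0 (eq_zero_of_apply_zero_of_spatial ?_ hs)
    rw [hs, norm_zero, mul_zero] at hcs
    exact abs_eq_zero.1 (le_antisymm (nonpos_of_mul_nonpos_left hcs hp.2) (abs_nonneg _))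
  have : |v 0| < ‖spatial v‖ := by
    refine lt_of_mul_lt_mul_right ?_ hp.2.le
    nlinarith [mul_lt_mul_of_pos_right (norm_spatial_lt hp) hsv]
  rw [mink_self, ← sq_abs (v 0)]
  nlinarith [abs_nonneg (v 0)]

lemma mink_self_nonneg (hp : p ∈ hyperboloid n) (hv : mink p v = 0) : 0 ≤ mink v v := by
  rcases eq_or_ne v 0 with rfl | hv0
  · simp [mink]
  · exact (mink_self_pos hp hv hv0).le

lemma sq_mink_le_and_smul_eq (hp : p ∈ hyperboloid n) (hv : mink p v = 0) (hw : mink p w = 0) :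
    mink v w ^ 2 ≤ mink v v * mink w w ∧
      (mink v w ^ 2 = mink v v * mink w w → mink v v • w = mink v w • v) := by
  set u := mink v v • w + (-mink v w) • v
  have hu : mink p u = 0 := by simp only [u, mink_smul_add_smul_right, hv, hw]; ring
  have huu : mink u u = mink v v * (mink v v * mink w w - mink v w ^ 2) := by
    simp only [u, mink_smul_add_smul_left, mink_smul_add_smul_right, mink_comm w v]; ring
  rcases eq_or_ne v 0 with rfl | hv0
  · simp [mink]
  have hvv := mink_self_pos hp hv hv0
  refine ⟨?_, fun h => ?_⟩
  · nlinarith [mink_self_nonneg hp hu]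
  · have hu0 : u = 0 := by
      by_contra hu0
      linarith [mink_self_pos hp hu hu0, show mink u u = 0 by rw [huu, h]; ring]
    rw [← sub_eq_zero, ← hu0, sub_eq_add_neg, ← neg_smul]

variable {ξ : Fin (n + 1) → ℝ}

lemma sq_mink_le_of_mink_self_nonpos (hp : p ∈ hyperboloid n) (hv : mink p v = 0)
    (hξ : mink ξ ξ ≤ 0) : mink v ξ ^ 2 ≤ mink v v * mink p ξ ^ 2 := by
  set w := (1 : ℝ) • ξ + mink p ξ • p
  have hw : mink p w = 0 := by simp only [w, mink_smul_add_smul_right, hp.1]; ring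
  have hvw : mink v w = mink v ξ := by
    simp only [w, mink_smul_add_smul_right, mink_comm v p, hv]; ring
  have hww : mink w w = mink ξ ξ + mink p ξ ^ 2 := by
    simp only [w, mink_smul_add_smul_left, mink_smul_add_smul_right, mink_comm ξ p, hp.1]; ring
  have := (sq_mink_le_and_smul_eq hp hv hw).1
  rw [hvw, hww] at this
  nlinarith [mink_self_nonneg hp hv]

lemma abs_mink_le_of_mink_self_nonpos (hp : p ∈ hyperboloid n) (hv : mink p v = 0)
    (hξ : mink ξ ξ ≤ 0) : |mink v ξ| ≤ √(mink v v) * |mink p ξ| := by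
  rw [← Real.sqrt_sq_eq_abs (mink p ξ), ← Real.sqrt_mul (mink_self_nonneg hp hv)]
  exact Real.abs_le_sqrt (sq_mink_le_of_mink_self_nonpos hp hv hξ)

lemma exists_eq_smul_of_sq_mink_eq (hp : p ∈ hyperboloid n) (hv : mink p v = 0) (hv0 : v ≠ 0)
    (hξ : mink ξ ξ = 0) (h : mink v ξ ^ 2 = mink v v * mink p ξ ^ 2) :
    ∃ σ ∈ ({(√(mink v v))⁻¹, -(√(mink v v))⁻¹} : Set ℝ), ∃ c : ℝ, ξ = c • (p + σ • v) := by
  set a := mink p ξ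
  set b := mink v ξ
  set s := √(mink v v)
  have hs : 0 < s := Real.sqrt_pos.2 (mink_self_pos hp hv hv0)
  have hs2 : s ^ 2 = mink v v := Real.sq_sqrt (mink_self_pos hp hv hv0).le
  set w := (1 : ℝ) • ξ + a • p
  have hw : mink p w = 0 := by simp only [w, a, mink_smul_add_smul_right, hp.1]; ring
  have hvw : mink v w = b := by
    simp only [w, b, mink_smul_add_smul_right, mink_comm v p, hv]; ring
  have hww : mink w w = a ^ 2 := by
    simp only [w, a, mink_smul_add_smul_left, mink_smul_add_smul_right, mink_comm ξ p, hp.1, hξ]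
    ring
  have hvξ := (sq_mink_le_and_smul_eq hp hv hw).2 (by rw [hvw, hww, h])
  rw [hvw, ← hs2] at hvξ
  have hb : b = s * a ∨ b = -(s * a) := sq_eq_sq_iff_eq_or_eq_neg.1 (by rw [h, ← hs2]; ring)
  have key : ∀ ε : ℝ, b = ε * (s * a) → ξ = (-a) • (p + (-ε * s⁻¹) • v) := fun ε hε => by
    funext i
    have := congrFun hvξ i
    simp only [w, Pi.smul_apply, Pi.add_apply, smul_eq_mul, hε] at this ⊢
    field_simp
    refine mul_left_cancel₀ hs.ne' ?_
    linear_combination this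
  rcases hb with hb | hb
  · exact ⟨-s⁻¹, by simp, -a, by simpa using key 1 (by rw [hb, one_mul])⟩
  · exact ⟨s⁻¹, by simp, -a, by simpa using key (-1) (by rw [hb, neg_one_mul])⟩

end Minkowski

section boundary

variable {θ : EuclideanSpace ℝ (Fin n)}

@[simp]
lemma nullVec_zero (θ : EuclideanSpace ℝ (Fin n)) : nullVec θ 0 = 1 := rfl

@[simp]
lemma spatial_nullVec (θ : EuclideanSpace ℝ (Fin n)) : spatial (nullVec θ) = θ := rfl

lemma mink_nullVec_self (hθ : ‖θ‖ = 1) : mink (nullVec θ) (nullVec θ) = 0 := by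
  simp [mink_self, hθ]

lemma subsingleton_nullVec_eq_smul (x : Fin (n + 1) → ℝ) :
    {θ : EuclideanSpace ℝ (Fin n) | ∃ c : ℝ, nullVec θ = c • x}.Subsingleton := by
  rintro θ ⟨c, hc⟩ θ' ⟨c', hc'⟩
  have h0 : c * x 0 = c' * x 0 := by
    simpa using (congrFun hc 0).symm.trans (congrFun hc' 0)
  have hx0 : x 0 ≠ 0 := fun hx => by simpa [hx] using congrFun hc 0
  rw [← spatial_nullVec θ, ← spatial_nullVec θ', hc, hc', mul_right_cancel₀ hx0 h0]

def expBusemann (θ : EuclideanSpace ℝ (Fin n)) (q : Fin (n + 1) → ℝ) : ℝ :=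
  -mink q (nullVec θ)

lemma expBusemann_eq (θ : EuclideanSpace ℝ (Fin n)) (q : Fin (n + 1) → ℝ) :
    expBusemann θ q = q 0 - ⟪spatial q, θ⟫ := by
  rw [expBusemann, mink_eq_inner, spatial_nullVec, nullVec_zero]; ring

lemma expBusemann_smul_add_smul (a b : ℝ) (x y : Fin (n + 1) → ℝ) :
    expBusemann θ (a • x + b • y) = a * expBusemann θ x + b * expBusemann θ y := by
  simp only [expBusemann, mink_smul_add_smul_left]; ring

lemma continuous_expBusemann :
    Continuous fun x : EuclideanSpace ℝ (Fin n) × (Fin (n + 1) → ℝ) => expBusemann x.1 x.2 := by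
  simp only [expBusemann_eq]
  exact ((continuous_apply 0).comp continuous_snd).sub
    ((continuous_spatial.comp continuous_snd).inner continuous_fst)

lemma abs_sub_expBusemann_le (hθ : ‖θ‖ = 1) (q : Fin (n + 1) → ℝ) :
    |q 0 - expBusemann θ q| ≤ ‖spatial q‖ := by
  simpa [expBusemann_eq, hθ] using abs_real_inner_le_norm (spatial q) θ

lemma expBusemann_pos (hp : p ∈ hyperboloid n) (hθ : ‖θ‖ = 1) : 0 < expBusemann θ p := by
  linarith [(abs_le.1 (abs_sub_expBusemann_le hθ p)).2, norm_spatial_lt hp]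

lemma abs_expBusemann_le (hp : p ∈ hyperboloid n) (hv : mink p v = 0) (hθ : ‖θ‖ = 1) :
    |expBusemann θ v| ≤ √(mink v v) * expBusemann θ p := by
  have h := abs_mink_le_of_mink_self_nonpos hp hv (mink_nullVec_self hθ).le
  rw [← abs_neg, ← abs_neg (mink p _)] at h
  rwa [← expBusemann, ← expBusemann, abs_of_pos (expBusemann_pos hp hθ)] at h

lemma sq_expBusemann_le (hp : p ∈ hyperboloid n) (hv : mink p v = 0) (hθ : ‖θ‖ = 1) :
    expBusemann θ v ^ 2 ≤ mink v v * expBusemann θ p ^ 2 := by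
  simpa [expBusemann] using sq_mink_le_of_mink_self_nonpos hp hv (mink_nullVec_self hθ).le

end boundary

section coshSinh

/-- A linear functional restricted to the hyperbolic geodesic `cosh (s t) • p + sinh (s t) / s • v`
takes the values `coshSinh ℓ(p) ℓ(v) s t`. -/
def coshSinh (a b s t : ℝ) : ℝ := cosh (s * t) * a + sinh (s * t) / s * b

variable {a b s t : ℝ}

lemma hasDerivAt_coshSinh (hs : s ≠ 0) (t : ℝ) :
    HasDerivAt (coshSinh a b s) (coshSinh b (s ^ 2 * a) s t) t := by
  have h : HasDerivAt (fun t : ℝ => s * t) s t := by simpa using (hasDerivAt_id t).const_mul s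
  refine ((h.cosh.mul_const a).add ((h.sinh.div_const s).mul_const b)).congr_deriv ?_
  simp only [coshSinh]
  field_simp
  ring

lemma coshSinh_mul (c : ℝ) : coshSinh (c * a) (c * b) s t = c * coshSinh a b s t := by
  simp only [coshSinh]; ring

lemma sq_mul_coshSinh_sq_sub (hs : s ≠ 0) :
    s ^ 2 * coshSinh a b s t ^ 2 - coshSinh b (s ^ 2 * a) s t ^ 2 = s ^ 2 * a ^ 2 - b ^ 2 := by
  simp only [coshSinh]
  field_simp
  linear_combination (s ^ 2 * a ^ 2 - b ^ 2) * cosh_sq (s * t)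

lemma mul_exp_neg_le_coshSinh (hs : 0 < s) (hb : |b| ≤ s * a) :
    a * exp (-(s * |t|)) ≤ coshSinh a b s t := by
  have hsinh : |sinh (s * t) / s * b| ≤ a * sinh (s * |t|) := by
    rw [abs_mul, abs_div, abs_of_pos hs, abs_sinh, abs_mul, abs_of_pos hs, div_mul_eq_mul_div,
      div_le_iff₀ hs]
    nlinarith [sinh_nonneg_iff.2 (mul_nonneg hs.le (abs_nonneg t))]
  have hexp : exp (-(s * |t|)) = cosh (s * t) - sinh (s * |t|) := by
    rw [← cosh_sub_sinh, ← cosh_abs (s * t), abs_mul, abs_of_pos hs]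
  rw [hexp, coshSinh]
  linarith [neg_abs_le (sinh (s * t) / s * b)]

lemma coshSinh_pos (hs : 0 < s) (ha : 0 < a) (hb : |b| ≤ s * a) : 0 < coshSinh a b s t :=
  (mul_pos ha (exp_pos _)).trans_le (mul_exp_neg_le_coshSinh hs hb)

lemma sq_le_sq_mul_sq_of_abs_le (hb : |b| ≤ s * a) : b ^ 2 ≤ s ^ 2 * a ^ 2 := by
  rw [← mul_pow]; exact sq_le_sq' (abs_le.1 hb).1 (abs_le.1 hb).2

lemma hasDerivAt_log_coshSinh (hs : 0 < s) (ha : 0 < a) (hb : |b| ≤ s * a) (t : ℝ) :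
    HasDerivAt (fun t => log (coshSinh a b s t))
      (coshSinh b (s ^ 2 * a) s t / coshSinh a b s t) t :=
  (hasDerivAt_coshSinh hs.ne' t).log (coshSinh_pos hs ha hb).ne'

lemma hasDerivAt_coshSinh_div (hs : 0 < s) (ha : 0 < a) (hb : |b| ≤ s * a) (t : ℝ) :
    HasDerivAt (fun t => coshSinh b (s ^ 2 * a) s t / coshSinh a b s t)
      ((s ^ 2 * a ^ 2 - b ^ 2) / coshSinh a b s t ^ 2) t := by
  refine ((hasDerivAt_coshSinh hs.ne' t).div (hasDerivAt_coshSinh hs.ne' t)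
    (coshSinh_pos hs ha hb).ne').congr_deriv ?_
  rw [coshSinh_mul, ← sq_mul_coshSinh_sq_sub hs.ne']
  ring

lemma abs_coshSinh_div_le (hs : 0 < s) (ha : 0 < a) (hb : |b| ≤ s * a) :
    |coshSinh b (s ^ 2 * a) s t / coshSinh a b s t| ≤ s := by
  have hG := coshSinh_pos (t := t) hs ha hb
  have := sq_mul_coshSinh_sq_sub (a := a) (b := b) (t := t) hs.ne'
  rw [abs_div, abs_of_pos hG, div_le_iff₀ hG]
  refine abs_le_of_sq_le_sq ?_ (by positivity)
  nlinarith [sq_le_sq_mul_sq_of_abs_le hb]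

lemma div_sq_coshSinh_nonneg (hb : |b| ≤ s * a) :
    0 ≤ (s ^ 2 * a ^ 2 - b ^ 2) / coshSinh a b s t ^ 2 :=
  div_nonneg (sub_nonneg.2 (sq_le_sq_mul_sq_of_abs_le hb)) (sq_nonneg _)

lemma div_sq_coshSinh_le (hs : 0 < s) (ha : 0 < a) (hb : |b| ≤ s * a) {T : ℝ} (hT : |t| ≤ T) :
    (s ^ 2 * a ^ 2 - b ^ 2) / coshSinh a b s t ^ 2 ≤ s ^ 2 * exp (s * T) ^ 2 := by
  have hG : a * exp (-(s * T)) ≤ coshSinh a b s t :=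
    le_trans (by gcongr) (mul_exp_neg_le_coshSinh (t := t) hs hb)
  calc (s ^ 2 * a ^ 2 - b ^ 2) / coshSinh a b s t ^ 2
      ≤ s ^ 2 * a ^ 2 / (a * exp (-(s * T))) ^ 2 := by
        gcongr
        linarith [sq_nonneg b]
    _ = s ^ 2 * exp (s * T) ^ 2 := by
        rw [exp_neg]
        field_simp

end coshSinh

lemma _root_.Continuous.coshSinh {X : Type*} [TopologicalSpace X] {f g : X → ℝ}
    (hf : Continuous f) (hg : Continuous g) (s t : ℝ) :
    Continuous fun x => coshSinh (f x) (g x) s t := by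
  unfold Busemann.coshSinh; fun_prop

section geodesic

variable {t : ℝ}

lemma hypGeod_apply (p v : Fin (n + 1) → ℝ) (t : ℝ) (i : Fin (n + 1)) :
    hypGeod p v t i = coshSinh (p i) (v i) √(mink v v) t := rfl

lemma expBusemann_hypGeod (θ : EuclideanSpace ℝ (Fin n)) (p v : Fin (n + 1) → ℝ) (t : ℝ) :
    expBusemann θ (hypGeod p v t) = coshSinh (expBusemann θ p) (expBusemann θ v) √(mink v v) t :=
  expBusemann_smul_add_smul _ _ _ _

@[simp]
lemma hypGeod_zero (p v : Fin (n + 1) → ℝ) : hypGeod p v 0 = p := by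
  simp [hypGeod]

@[simp]
lemma hypGeod_zero_right (p : Fin (n + 1) → ℝ) (t : ℝ) : hypGeod p 0 t = p := by
  simp [hypGeod, mink]

lemma mink_hypGeod_self (hp : p ∈ hyperboloid n) (hv : mink p v = 0) (hv0 : v ≠ 0) :
    mink (hypGeod p v t) (hypGeod p v t) = -1 := by
  rw [hypGeod, mink_smul_add_smul_left, mink_smul_add_smul_right, mink_smul_add_smul_right, hp.1,
    hv, mink_comm v p, hv]
  set s := √(mink v v)
  have hs : 0 < s := Real.sqrt_pos.2 (mink_self_pos hp hv hv0)
  rw [← Real.sq_sqrt (mink_self_pos hp hv hv0).le]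
  field_simp
  linear_combination (-s ^ 2) * cosh_sq (s * t)

lemma mink_pi_single_zero (x : Fin (n + 1) → ℝ) : mink x (Pi.single 0 1) = -x 0 := by
  simp [mink, Fin.succ_ne_zero]

lemma hypGeod_mem_hyperboloid (hp : p ∈ hyperboloid n) (hv : mink p v = 0) (t : ℝ) :
    hypGeod p v t ∈ hyperboloid n := by
  rcases eq_or_ne v 0 with rfl | hv0
  · simpa using hp
  refine ⟨mink_hypGeod_self hp hv hv0, ?_⟩
  have hv_zero : |v 0| ≤ √(mink v v) * p 0 := by
    have := abs_mink_le_of_mink_self_nonpos hp hv (ξ := Pi.single 0 1)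
      (by simp [mink_pi_single_zero])
    rwa [mink_pi_single_zero, mink_pi_single_zero, abs_neg, abs_neg, abs_of_pos hp.2] at this
  exact coshSinh_pos (Real.sqrt_pos.2 (mink_self_pos hp hv hv0)) hp.2 hv_zero

lemma exists_hypGeod_eq (hp : p ∈ hyperboloid n) (hq : q ∈ hyperboloid n) (hne : q ≠ p) :
    ∃ w, mink p w = 0 ∧ w ≠ 0 ∧ ∃ t, 0 < t ∧ hypGeod p w t = q := by
  set c := -mink p q
  set w := (1 : ℝ) • q + (-c) • p
  have hw : mink p w = 0 := by simp only [w, c, mink_smul_add_smul_right, hp.1]; ring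
  have hww : mink w w = c ^ 2 - 1 := by
    simp only [w, c, mink_smul_add_smul_left, mink_smul_add_smul_right, mink_comm q p, hp.1, hq.1]
    ring
  have hw0 : w ≠ 0 := by
    intro hw0
    have hc : c = 1 := by
      have := neg_mink_pos hp hq
      nlinarith [show mink w w = 0 by simp [hw0, mink]]
    exact hne (by simpa [w, hc, add_neg_eq_zero] using hw0)
  have hc : 1 < c := by nlinarith [mink_self_pos hp hw hw0, neg_mink_pos hp hq]
  have hs : √(mink w w) = √(c ^ 2 - 1) := by rw [hww]
  have hs0 : 0 < √(mink w w) := Real.sqrt_pos.2 (mink_self_pos hp hw hw0)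
  refine ⟨w, hw, hw0, arcosh c / √(mink w w), div_pos (arcosh_pos hc) hs0, ?_⟩
  rw [hypGeod, mul_div_cancel₀ _ hs0.ne', cosh_arcosh hc.le, sinh_arcosh hc.le, ← hs,
    div_self hs0.ne']
  module

end geodesic

section integral

lemma ae_sq_expBusemann_lt {lam : Measure (Metric.sphere (0 : EuclideanSpace ℝ (Fin n)) 1)}
    [NullSingletonClass lam] (hp : p ∈ hyperboloid n)
    (hv : mink p v = 0) (hv0 : v ≠ 0) :
    ∀ᵐ θ : Metric.sphere (0 : EuclideanSpace ℝ (Fin n)) 1 ∂lam,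
      expBusemann θ v ^ 2 < mink v v * expBusemann θ p ^ 2 := by
  set null := fun σ : ℝ => {θ : EuclideanSpace ℝ (Fin n) | ∃ c : ℝ, nullVec θ = c • (p + σ • v)}
  have hnull : (Subtype.val ⁻¹' (null (√(mink v v))⁻¹ ∪ null (-(√(mink v v))⁻¹)) :
      Set (Metric.sphere (0 : EuclideanSpace ℝ (Fin n)) 1)).Countable :=
    ((subsingleton_nullVec_eq_smul _).countable.union
      (subsingleton_nullVec_eq_smul _).countable).preimage Subtype.val_injective
  refine ae_iff.2 (measure_mono_null (fun θ hθ => ?_) (hnull.measure_zero lam))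
  have hθ1 := norm_eq_of_mem_sphere θ
  obtain ⟨σ, hσ, hθσ⟩ := exists_eq_smul_of_sq_mink_eq hp hv hv0 (mink_nullVec_self hθ1) (by
    simpa [expBusemann] using le_antisymm (sq_expBusemann_le hp hv hθ1) (not_lt.1 hθ))
  rcases hσ with rfl | rfl
  exacts [Or.inl hθσ, Or.inr hθσ]

variable (lam : Measure (Metric.sphere (0 : EuclideanSpace ℝ (Fin n)) 1)) [IsFiniteMeasure lam]

lemma busemannSph_eq_log (θ : EuclideanSpace ℝ (Fin n)) (q : Fin (n + 1) → ℝ) :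
    busemannSph θ q = log (expBusemann θ q) := rfl

lemma continuous_expBusemann_sphere (q : Fin (n + 1) → ℝ) :
    Continuous fun θ : Metric.sphere (0 : EuclideanSpace ℝ (Fin n)) 1 => expBusemann θ q :=
  continuous_expBusemann.comp (continuous_subtype_val.prodMk continuous_const)

lemma continuous_busemannSph (hq : q ∈ hyperboloid n) :
    Continuous fun θ : Metric.sphere (0 : EuclideanSpace ℝ (Fin n)) 1 => busemannSph θ q :=
  (continuous_expBusemann_sphere q).log fun θ =>
    (expBusemann_pos hq (norm_eq_of_mem_sphere θ)).ne'

lemma integrable_busemannSph (hq : q ∈ hyperboloid n) :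
    Integrable (fun θ : Metric.sphere (0 : EuclideanSpace ℝ (Fin n)) 1 => busemannSph θ q) lam :=
  (continuous_busemannSph hq).integrable_of_hasCompactSupport (.of_compactSpace _)

lemma continuousOn_busemannAvg : ContinuousOn (busemannAvg lam) (hyperboloid n) := by
  refine continuousOn_integral_of_compact_support isCompact_univ ?_ fun _ _ _ h => (h trivial).elim
  exact (continuous_expBusemann.comp ((continuous_subtype_val.comp continuous_snd).prodMk
    continuous_fst)).continuousOn.log
    fun x hx => (expBusemann_pos hx.1 (norm_eq_of_mem_sphere x.2)).ne'

lemma coshSinh_expBusemann_pos (hp : p ∈ hyperboloid n) (hv : mink p v = 0)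
    (θ : Metric.sphere (0 : EuclideanSpace ℝ (Fin n)) 1) (t : ℝ) :
    0 < coshSinh (expBusemann θ p) (expBusemann θ v) √(mink v v) t := by
  rw [← expBusemann_hypGeod]
  exact expBusemann_pos (hypGeod_mem_hyperboloid hp hv t) (norm_eq_of_mem_sphere θ)

lemma continuous_coshSinh_div (hp : p ∈ hyperboloid n) (hv : mink p v = 0) (t : ℝ) :
    Continuous fun θ : Metric.sphere (0 : EuclideanSpace ℝ (Fin n)) 1 =>
      coshSinh (expBusemann θ v) (√(mink v v) ^ 2 * expBusemann θ p) √(mink v v) t /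
        coshSinh (expBusemann θ p) (expBusemann θ v) √(mink v v) t :=
  ((continuous_expBusemann_sphere v).coshSinh
    ((continuous_expBusemann_sphere p).const_mul _) _ t).div
    ((continuous_expBusemann_sphere p).coshSinh (continuous_expBusemann_sphere v) _ t)
    fun θ => (coshSinh_expBusemann_pos hp hv θ t).ne'

lemma continuous_div_sq_coshSinh (hp : p ∈ hyperboloid n) (hv : mink p v = 0) (c t : ℝ) :
    Continuous fun θ : Metric.sphere (0 : EuclideanSpace ℝ (Fin n)) 1 =>
      (c * expBusemann θ p ^ 2 - expBusemann θ v ^ 2) /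
        coshSinh (expBusemann θ p) (expBusemann θ v) √(mink v v) t ^ 2 :=
  ((continuous_const.mul ((continuous_expBusemann_sphere p).pow 2)).sub
    ((continuous_expBusemann_sphere v).pow 2)).div
    (((continuous_expBusemann_sphere p).coshSinh (continuous_expBusemann_sphere v) _ t).pow 2)
    fun θ => pow_ne_zero 2 (coshSinh_expBusemann_pos hp hv θ t).ne'

lemma hasDerivAt_busemannAvg_hypGeod (hp : p ∈ hyperboloid n) (hv : mink p v = 0) (hv0 : v ≠ 0)
    (t₀ : ℝ) :
    HasDerivAt (fun t => busemannAvg lam (hypGeod p v t))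
      (∫ θ, coshSinh (expBusemann θ v) (√(mink v v) ^ 2 * expBusemann θ p) √(mink v v) t₀ /
        coshSinh (expBusemann θ p) (expBusemann θ v) √(mink v v) t₀ ∂lam) t₀ := by
  set s := √(mink v v)
  have hs : 0 < s := Real.sqrt_pos.2 (mink_self_pos hp hv hv0)
  have ha θ := expBusemann_pos hp (norm_eq_of_mem_sphere (r := 1) (x := θ))
  have hb θ := abs_expBusemann_le hp hv (norm_eq_of_mem_sphere (r := 1) (x := θ))
  refine (hasDerivAt_integral_of_dominated_loc_of_deriv_le (bound := fun _ => s)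
    (F' := fun t θ => coshSinh (expBusemann θ v) (s ^ 2 * expBusemann θ p) s t /
      coshSinh (expBusemann θ p) (expBusemann θ v) s t) Filter.univ_mem
    (.of_forall fun t =>
      (continuous_busemannSph (hypGeod_mem_hyperboloid hp hv t)).aestronglyMeasurable)
    (integrable_busemannSph lam (hypGeod_mem_hyperboloid hp hv t₀))
    (continuous_coshSinh_div hp hv t₀).aestronglyMeasurable
    (.of_forall fun θ t _ => abs_coshSinh_div_le hs (ha θ) (hb θ))
    (integrable_const s) (.of_forall fun θ t _ => ?_)).2
  simp only [busemannSph_eq_log, expBusemann_hypGeod]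
  exact hasDerivAt_log_coshSinh hs (ha θ) (hb θ) t

lemma hasDerivAt_integral_coshSinh_div (hp : p ∈ hyperboloid n) (hv : mink p v = 0)
    (hv0 : v ≠ 0) (t₀ : ℝ) :
    HasDerivAt (fun t => ∫ θ, coshSinh (expBusemann θ v) (√(mink v v) ^ 2 * expBusemann θ p)
        √(mink v v) t / coshSinh (expBusemann θ p) (expBusemann θ v) √(mink v v) t ∂lam)
      (∫ θ, (√(mink v v) ^ 2 * expBusemann θ p ^ 2 - expBusemann θ v ^ 2) /
        coshSinh (expBusemann θ p) (expBusemann θ v) √(mink v v) t₀ ^ 2 ∂lam) t₀ := by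
  set s := √(mink v v)
  have hs : 0 < s := Real.sqrt_pos.2 (mink_self_pos hp hv hv0)
  have ha θ := expBusemann_pos hp (norm_eq_of_mem_sphere (r := 1) (x := θ))
  have hb θ := abs_expBusemann_le hp hv (norm_eq_of_mem_sphere (r := 1) (x := θ))
  refine (hasDerivAt_integral_of_dominated_loc_of_deriv_le
    (bound := fun _ => s ^ 2 * exp (s * (|t₀| + 1)) ^ 2)
    (F' := fun t θ => (s ^ 2 * expBusemann θ p ^ 2 - expBusemann θ v ^ 2) /
      coshSinh (expBusemann θ p) (expBusemann θ v) s t ^ 2) (Metric.ball_mem_nhds t₀ one_pos)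
    (.of_forall fun t => (continuous_coshSinh_div hp hv t).aestronglyMeasurable)
    ((continuous_coshSinh_div hp hv t₀).integrable_of_hasCompactSupport (.of_compactSpace _))
    (continuous_div_sq_coshSinh hp hv _ t₀).aestronglyMeasurable
    (.of_forall fun θ t ht => ?_) (integrable_const _)
    (.of_forall fun θ t _ => hasDerivAt_coshSinh_div hs (ha θ) (hb θ) t)).2
  rw [Real.norm_of_nonneg (div_sq_coshSinh_nonneg (hb θ))]
  refine div_sq_coshSinh_le hs (ha θ) (hb θ) ?_
  have := abs_sub_abs_le_abs_sub t t₀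
  rw [Metric.mem_ball, Real.dist_eq] at ht
  linarith

lemma iteratedDeriv_two_busemannAvg_hypGeod (hp : p ∈ hyperboloid n) (hv : mink p v = 0)
    (hv0 : v ≠ 0) (t : ℝ) :
    iteratedDeriv 2 (fun t => busemannAvg lam (hypGeod p v t)) t =
      ∫ θ, (mink v v * expBusemann θ p ^ 2 - expBusemann θ v ^ 2) /
        coshSinh (expBusemann θ p) (expBusemann θ v) √(mink v v) t ^ 2 ∂lam := by
  have hderiv : deriv (fun t => busemannAvg lam (hypGeod p v t)) = _ :=
    funext fun t => (hasDerivAt_busemannAvg_hypGeod lam hp hv hv0 t).deriv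
  rw [iteratedDeriv_succ, iteratedDeriv_one, hderiv,
    (hasDerivAt_integral_coshSinh_div lam hp hv hv0 t).deriv,
    Real.sq_sqrt (mink_self_nonneg hp hv)]

lemma iteratedDeriv_two_busemannAvg_hypGeod_pos [NullSingletonClass lam] (hpos : 0 < lam univ)
    (hp : p ∈ hyperboloid n) (hv : mink p v = 0) (hv0 : v ≠ 0) (t : ℝ) :
    0 < iteratedDeriv 2 (fun t => busemannAvg lam (hypGeod p v t)) t := by
  rw [iteratedDeriv_two_busemannAvg_hypGeod lam hp hv hv0]
  refine (integral_pos_iff_support_of_nonneg (fun θ => div_nonneg ?_ (sq_nonneg _))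
    ((continuous_div_sq_coshSinh hp hv _ t).integrable_of_hasCompactSupport
      (.of_compactSpace _))).2 (hpos.trans_le (measure_mono_ae ?_))
  · exact sub_nonneg.2 (sq_expBusemann_le hp hv (norm_eq_of_mem_sphere θ))
  · filter_upwards [ae_sq_expBusemann_lt hp hv hv0] with θ hθ _
    exact (div_pos (sub_pos.2 hθ) (pow_pos (coshSinh_expBusemann_pos hp hv θ t) 2)).ne'

end integral

section properness

lemma inv_le_expBusemann (hq : q ∈ hyperboloid n) (hr : 1 ≤ ‖spatial q‖)
    {θ : EuclideanSpace ℝ (Fin n)} (hθ : ‖θ‖ = 1) : (3 * ‖spatial q‖)⁻¹ ≤ expBusemann θ q := by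
  have h1 := (abs_le.1 (abs_sub_expBusemann_le hθ q)).2
  have h2 : (q 0 - ‖spatial q‖) * (q 0 + ‖spatial q‖) = 1 := by
    linarith [apply_zero_sq_of_mem_hyperboloid hq]
  have h3 : (3 * ‖spatial q‖)⁻¹ ≤ q 0 - ‖spatial q‖ := by
    rw [inv_le_iff_one_le_mul₀ (by positivity)]
    nlinarith [norm_spatial_lt hq]
  linarith

lemma mul_norm_sub_sq_le_expBusemann (hq : q ∈ hyperboloid n) {u θ : EuclideanSpace ℝ (Fin n)}
    (hu : ‖u‖ = 1) (hθ : ‖θ‖ = 1) (hqu : spatial q = ‖spatial q‖ • u) :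
    ‖spatial q‖ * (‖θ - u‖ ^ 2 / 2) ≤ expBusemann θ q := by
  have h := norm_sub_sq_real θ u
  rw [hθ, hu, real_inner_comm] at h
  have hin : ⟪spatial q, θ⟫ = ‖spatial q‖ * ⟪u, θ⟫ := by
    conv_lhs => rw [hqu]
    exact real_inner_smul_left _ _ _
  rw [expBusemann_eq, hin, h]
  nlinarith [norm_spatial_lt hq]

lemma le_busemannAvg (lam : Measure (Metric.sphere (0 : EuclideanSpace ℝ (Fin n)) 1))
    [IsFiniteMeasure lam] (hq : q ∈ hyperboloid n) {ρ : ℝ} (hρ : 0 < ρ)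
    (hcap : ∀ u, lam.real (Metric.ball u ρ) ≤ lam.real Set.univ / 4)
    (hr : max 1 (2 / ρ ^ 2) ≤ ‖spatial q‖) :
    lam.real Set.univ / 2 * log ‖spatial q‖ +
        lam.real Set.univ * (3 / 4 * log (ρ ^ 2 / 2) - 1 / 4 * log 3) ≤ busemannAvg lam q := by
  set r := ‖spatial q‖
  set m := lam.real Set.univ
  have hr1 : 1 ≤ r := (le_max_left _ _).trans hr
  have hrρ : 1 ≤ r * (ρ ^ 2 / 2) := by
    have := (le_max_right _ _).trans hr
    rw [div_le_iff₀ (by positivity)] at this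
    linarith
  set u : Metric.sphere (0 : EuclideanSpace ℝ (Fin n)) 1 :=
    ⟨r⁻¹ • spatial q, by simp [norm_smul, r, inv_mul_cancel₀ (by positivity : r ≠ 0)]⟩
  have hqu : spatial q = r • (u : EuclideanSpace ℝ (Fin n)) := by
    simp [u, smul_smul, mul_inv_cancel₀ (by positivity : r ≠ 0)]
  have hα : ∀ θ ∈ Metric.ball u ρ, -log (3 * r) ≤ busemannSph θ q := fun θ _ => by
    rw [← log_inv, busemannSph_eq_log]
    exact log_le_log (by positivity) (inv_le_expBusemann hq hr1 (norm_eq_of_mem_sphere θ))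
  have hβ : ∀ θ ∈ (Metric.ball u ρ)ᶜ, log (r * (ρ ^ 2 / 2)) ≤ busemannSph θ q := fun θ hθ => by
    have hd : ρ ≤ ‖(θ : EuclideanSpace ℝ (Fin n)) - u‖ := by
      rw [← dist_eq_norm, ← Subtype.dist_eq]
      simpa using hθ
    rw [busemannSph_eq_log]
    exact log_le_log (by positivity) ((mul_le_mul_of_nonneg_left (by gcongr) (by positivity)).trans
      (mul_norm_sub_sq_le_expBusemann hq (norm_eq_of_mem_sphere u) (norm_eq_of_mem_sphere θ) hqu))
  have hint := mul_measureReal_add_le_integral (integrable_busemannSph lam hq)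
    Metric.isOpen_ball.measurableSet hα hβ
  rw [measureReal_compl Metric.isOpen_ball.measurableSet] at hint
  have hcapu := hcap u
  have hlogα : 0 ≤ log (3 * r) := log_nonneg (by linarith)
  have hlogβ : 0 ≤ log (r * (ρ ^ 2 / 2)) := log_nonneg hrρ
  rw [log_mul (by positivity) (by positivity), log_mul (by positivity) (by positivity)] at *
  have := measureReal_nonneg (μ := lam) (s := Metric.ball u ρ)
  unfold busemannAvg
  nlinarith

end properness

lemma deriv_busemannAvg_hypGeod_eq_zero_of_isMinOn
    (lam : Measure (Metric.sphere (0 : EuclideanSpace ℝ (Fin n)) 1)) (hp : p ∈ hyperboloid n)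
    (hmin : IsMinOn (busemannAvg lam) (hyperboloid n) p) (hv : mink p v = 0) :
    deriv (fun t => busemannAvg lam (hypGeod p v t)) 0 = 0 := by
  refine IsLocalMin.deriv_eq_zero (IsMinOn.isLocalMin (s := Set.univ) (fun t _ => ?_)
    Filter.univ_mem)
  simpa using hmin (hypGeod_mem_hyperboloid hp hv t)

section minimum

variable (lam : Measure (Metric.sphere (0 : EuclideanSpace ℝ (Fin n)) 1)) [IsFiniteMeasure lam]
  [NullSingletonClass lam]

lemma isCompact_busemannAvg_sublevel (hpos : 0 < lam Set.univ) (c : ℝ) :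
    IsCompact {p | p ∈ hyperboloid n ∧ busemannAvg lam p ≤ c} := by
  set m := lam.real Set.univ
  have hm : 0 < m := ENNReal.toReal_pos hpos.ne' (measure_ne_top _ _)
  obtain ⟨ρ, hρ, hcap⟩ := exists_pos_forall_measure_ball_lt lam
    (ENNReal.ofReal_pos.2 (by positivity : 0 < m / 4))
  set K := m * (3 / 4 * log (ρ ^ 2 / 2) - 1 / 4 * log 3)
  set R := max (max 1 (2 / ρ ^ 2)) (exp ((c - K) / (m / 2)))
  have hbound q (hq : q ∈ {p | p ∈ hyperboloid n ∧ busemannAvg lam p ≤ c}) :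
      ‖spatial q‖ ≤ R := by
    by_contra! hR
    have hr : max 1 (2 / ρ ^ 2) ≤ ‖spatial q‖ := (le_max_left _ _).trans hR.le
    have h1 : m / 2 * log ‖spatial q‖ + K ≤ busemannAvg lam q :=
      le_busemannAvg lam hq.1 hρ (fun u => (ENNReal.toReal_lt_of_lt_ofReal (hcap u)).le) hr
    have h2 : (c - K) / (m / 2) < log ‖spatial q‖ := by
      rw [lt_log_iff_exp_lt (by linarith [le_max_left 1 (2 / ρ ^ 2)])]
      exact (le_max_right _ _).trans_lt hR
    rw [div_lt_iff₀ (by positivity)] at h2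
    linarith [hq.2]
  refine Metric.isCompact_of_isClosed_isBounded ?_ ?_
  · exact (continuousOn_busemannAvg lam).preimage_isClosed_of_isClosed isClosed_hyperboloid
      isClosed_Iic
  · exact isBounded_iff_forall_norm_le.2 ⟨1 + R, fun q hq =>
      (norm_le_one_add_norm_spatial hq.1).trans (by linarith [hbound q hq])⟩

lemma exists_isMinOn_busemannAvg (hpos : 0 < lam Set.univ) :
    ∃ p ∈ hyperboloid n, IsMinOn (busemannAvg lam) (hyperboloid n) p := by
  have ho : (Pi.single 0 1 : Fin (n + 1) → ℝ) ∈ hyperboloid n := by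
    simp [hyperboloid, mink_pi_single_zero]
  refine (continuousOn_busemannAvg lam).exists_isMinOn' isClosed_hyperboloid ho ?_
  exact Filter.eventually_inf_principal.2 <| Filter.mem_of_superset
    (isCompact_busemannAvg_sublevel lam hpos _).compl_mem_cocompact
    fun q hq hqH => le_of_not_ge fun h => hq ⟨hqH, h⟩

lemma busemannAvg_lt_of_deriv_eq_zero (hpos : 0 < lam Set.univ) (hp : p ∈ hyperboloid n)
    (hcrit : ∀ v, mink p v = 0 → deriv (fun t => busemannAvg lam (hypGeod p v t)) 0 = 0)
    (hq : q ∈ hyperboloid n) (hne : q ≠ p) : busemannAvg lam p < busemannAvg lam q := by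
  obtain ⟨w, hw, hw0, t, ht, rfl⟩ := exists_hypGeod_eq hp hq hne
  have hmono : StrictMono (deriv fun t => busemannAvg lam (hypGeod p w t)) :=
    strictMono_of_deriv_pos fun t => by
      simpa [iteratedDeriv_succ] using
        iteratedDeriv_two_busemannAvg_hypGeod_pos lam hpos hp hw hw0 t
  simpa using lt_of_strictMono_deriv
    (fun t => (hasDerivAt_busemannAvg_hypGeod lam hp hw hw0 t).differentiableAt) hmono
    (hcrit w hw) ht

end minimum

end Busemann

open Busemann

theorem busemannAvg_proper_convex_min_general {n : ℕ}
    (lam : Measure (Metric.sphere (0 : EuclideanSpace ℝ (Fin n)) 1))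
    [IsFiniteMeasure lam] [NullSingletonClass lam] (hpos : 0 < lam Set.univ) :
    (∀ c : ℝ, IsCompact {p : Fin (n + 1) → ℝ |
        (mink p p = -1 ∧ 0 < p 0) ∧ busemannAvg lam p ≤ c}) ∧
    (∀ p : Fin (n + 1) → ℝ, mink p p = -1 → 0 < p 0 →
        ∀ v : Fin (n + 1) → ℝ, mink p v = 0 → v ≠ 0 →
          0 < iteratedDeriv 2 (fun t => busemannAvg lam (hypGeod p v t)) 0) ∧
    (∃ p : Fin (n + 1) → ℝ, (mink p p = -1 ∧ 0 < p 0) ∧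
        (∀ v : Fin (n + 1) → ℝ, mink p v = 0 →
          deriv (fun t => busemannAvg lam (hypGeod p v t)) 0 = 0) ∧
        (∀ q : Fin (n + 1) → ℝ, mink q q = -1 → 0 < q 0 → q ≠ p →
          busemannAvg lam p < busemannAvg lam q) ∧
        (∀ p' : Fin (n + 1) → ℝ, mink p' p' = -1 → 0 < p' 0 →
          (∀ v : Fin (n + 1) → ℝ, mink p' v = 0 →
            deriv (fun t => busemannAvg lam (hypGeod p' v t)) 0 = 0) → p' = p)) := by
  obtain ⟨p, hp, hmin⟩ := exists_isMinOn_busemannAvg lam hpos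
  have hcrit v (hv : mink p v = 0) := deriv_busemannAvg_hypGeod_eq_zero_of_isMinOn lam hp hmin hv
  refine ⟨isCompact_busemannAvg_sublevel lam hpos, fun p hp hp0 v hv hv0 =>
    iteratedDeriv_two_busemannAvg_hypGeod_pos lam hpos ⟨hp, hp0⟩ hv hv0 0, p, hp, hcrit,
    fun q hq hq0 => busemannAvg_lt_of_deriv_eq_zero lam hpos hp hcrit ⟨hq, hq0⟩,
    fun p' hp' hp'0 hcrit' => ?_⟩
  by_contra hne
  exact lt_asymm (busemannAvg_lt_of_deriv_eq_zero lam hpos hp hcrit ⟨hp', hp'0⟩ hne)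
    (busemannAvg_lt_of_deriv_eq_zero lam hpos ⟨hp', hp'0⟩ hcrit' hp (Ne.symm hne))

/-- Let `λ` be an atomless positive finite Radon measure on `∂ℍⁿ`.  Then
`B_λ(p) = ∫ B_θ(p) dλ(θ)` is proper (its sublevel sets in `ℍⁿ` are compact), strictly convex
(its Hessian, i.e. the second derivative along every nontrivial geodesic, is positive), and
it has a unique critical point in `ℍⁿ`, which is its unique global minimum. -/
theorem busemannAvg_proper_convex_min {n : ℕ} (hn : 2 ≤ n)
    (lam : Measure (Metric.sphere (0 : EuclideanSpace ℝ (Fin n)) 1))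
    [IsFiniteMeasure lam] [NullSingletonClass lam] (hpos : 0 < lam Set.univ) :
    (∀ c : ℝ, IsCompact {p : Fin (n + 1) → ℝ |
        (mink p p = -1 ∧ 0 < p 0) ∧ busemannAvg lam p ≤ c}) ∧
    (∀ p : Fin (n + 1) → ℝ, mink p p = -1 → 0 < p 0 →
        ∀ v : Fin (n + 1) → ℝ, mink p v = 0 → v ≠ 0 →
          0 < iteratedDeriv 2 (fun t => busemannAvg lam (hypGeod p v t)) 0) ∧
    (∃ p : Fin (n + 1) → ℝ, (mink p p = -1 ∧ 0 < p 0) ∧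
        (∀ v : Fin (n + 1) → ℝ, mink p v = 0 →
          deriv (fun t => busemannAvg lam (hypGeod p v t)) 0 = 0) ∧
        (∀ q : Fin (n + 1) → ℝ, mink q q = -1 → 0 < q 0 → q ≠ p →
          busemannAvg lam p < busemannAvg lam q) ∧
        (∀ p' : Fin (n + 1) → ℝ, mink p' p' = -1 → 0 < p' 0 →
          (∀ v : Fin (n + 1) → ℝ, mink p' v = 0 →
            deriv (fun t => busemannAvg lam (hypGeod p' v t)) 0 = 0) → p' = p)) :=
  busemannAvg_proper_convex_min_general lam hpos
end
end

section
/- Let X be a proper geodesic δ-hyperbolic space admitting a cocompact isometric action, with Patterson–Sullivan density {μ_x} on the horoboundary HX of dimension h(X) > 0, and let π: HX → ∂X be the natural Isom(X)-equivariant continuous surjection to the Gromov boundary. Then the pushforward measures π_*μ_p have no atoms, for every p ∈ X. -/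
/-!
A point `η₀` of the horoboundary has a horofunction `b η₀` which is unbounded below, since
`b η₀` decreases at unit speed along midpoint chains from `o` to the points `pₙ` defining
it. On the set of `η` with `|b η - b η₀| ≤ C`, the density `dμ_p/dμ_q` is therefore at most
`exp (h (b η₀ q - b η₀ p + 2C))`, which tends to `0` as `b η₀ q → -∞`. Since cocompactness
bounds the total masses of the `μ q` uniformly, each such set is `μ_p`-null, and the fiber
of `η₀` is a countable union of them.
-/

open MeasureTheory Filter

open Topology
open scoped ENNReal

theorem withDensity_apply_le_mul_of_forall_le {α : Type*} [MeasurableSpace α] {μ : Measure α}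
    [SFinite μ] {f : α → ℝ≥0∞} {s : Set α} {c : ℝ≥0∞} (hf : ∀ x ∈ s, f x ≤ c) :
    μ.withDensity f s ≤ c * μ s := by
  rw [withDensity_apply', lintegral_def]
  refine iSup₂_le fun φ hφ => ?_
  -- `s` need not be measurable: only the measurable minorants `φ ≤ f` are `≤ c` a.e. on `s`.
  have hφc : ∀ᵐ x ∂μ.restrict s, φ x ≤ c := by
    have hm : MeasurableSet {x | ¬φ x ≤ c} := by
      simpa only [not_le] using measurableSet_lt measurable_const φ.measurable
    rw [ae_iff, Measure.restrict_apply hm]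
    exact measure_mono_null (fun x hx => hx.1 ((hφ x).trans (hf x hx.2))) measure_empty
  calc φ.lintegral (μ.restrict s) = ∫⁻ x, φ x ∂μ.restrict s :=
        (SimpleFunc.lintegral_eq_lintegral _ _).symm
    _ ≤ ∫⁻ _, c ∂μ.restrict s := lintegral_mono_ae hφc
    _ = c * μ s := by rw [lintegral_const, Measure.restrict_apply_univ]

section Midpoints

variable {X : Type*} [MetricSpace X]

theorem exists_dist_mem_Ioc_of_midpoints
    (hmid : ∀ x y : X, ∃ m : X, dist x m = dist x y / 2 ∧ dist m y = dist x y / 2)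
    {o y : X} {T : ℝ} (hT : 0 < T) (hy : T < dist o y) :
    ∃ x : X, dist o x ∈ Set.Ioc T (2 * T) ∧ dist o x + dist x y = dist o y := by
  obtain ⟨k, hk⟩ := pow_unbounded_of_one_lt (dist o y / T) (one_lt_two (α := ℝ))
  induction k generalizing y with
  | zero =>
    rw [pow_zero, div_lt_one hT] at hk
    linarith
  | succ k ih =>
    by_cases hy2 : dist o y ≤ 2 * T
    · exact ⟨y, ⟨hy, hy2⟩, by simp⟩
    obtain ⟨m, hom, hmy⟩ := hmid o y
    have hm : T < dist o m := by linarith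
    have hmk : dist o m / T < 2 ^ k := by
      rwa [hom, div_right_comm, div_lt_iff₀ two_pos, ← pow_succ]
    obtain ⟨x, hx, hxm⟩ := ih hm hmk
    refine ⟨x, hx, le_antisymm ?_ (dist_triangle o x y)⟩
    linarith [dist_triangle x m y]

variable [ProperSpace X]

theorem exists_le_of_tendsto_dist_sub_dist
    (hmid : ∀ x y : X, ∃ m : X, dist x m = dist x y / 2 ∧ dist m y = dist x y / 2)
    {o : X} {B : X → ℝ} {p : ℕ → X} (hp : Tendsto (fun n => dist (p n) o) atTop atTop)
    (hB : ∀ x : X, Tendsto (fun n => dist (p n) x - dist (p n) o) atTop (𝓝 (B x)))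
    (t : ℝ) : ∃ q : X, B q ≤ t := by
  set T := max (-t) 1
  have hT : 0 < T := one_pos.trans_le (le_max_right _ _)
  have hx : ∀ n, ∃ x ∈ Metric.closedBall o (2 * T),
      T < dist o (p n) → dist (p n) x - dist (p n) o ≤ -T := by
    intro n
    by_cases hn : T < dist o (p n)
    · obtain ⟨x, ⟨hTx, hx2T⟩, hxp⟩ := exists_dist_mem_Ioc_of_midpoints hmid hT hn
      refine ⟨x, by rwa [Metric.mem_closedBall, dist_comm], fun _ => ?_⟩
      rw [dist_comm (p n) x, dist_comm (p n) o]
      linarith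
    · exact ⟨o, Metric.mem_closedBall_self (by positivity), fun h => absurd h hn⟩
  choose x hxK hxle using hx
  obtain ⟨q, -, φ, hφ, hxq⟩ := (isCompact_closedBall o (2 * T)).tendsto_subseq hxK
  refine ⟨q, le_trans ?_ (neg_le.1 (le_max_left (-t) 1))⟩
  have hdist : Tendsto (fun k => -T + dist (x (φ k)) q) atTop (𝓝 (-T)) := by
    simpa using tendsto_const_nhds.add (tendsto_iff_dist_tendsto_zero.1 hxq)
  refine le_of_tendsto_of_tendsto ((hB q).comp hφ.tendsto_atTop) hdist ?_
  have hfar : ∀ᶠ n in atTop, T < dist o (p n) := by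
    simpa only [dist_comm o] using hp.eventually_gt_atTop T
  filter_upwards [hφ.tendsto_atTop.eventually hfar] with k hk
  have := hxle (φ k) hk
  show dist (p (φ k)) q - dist (p (φ k)) o ≤ _
  linarith [dist_triangle (p (φ k)) (x (φ k)) q]

end Midpoints

section PattersonSullivan

variable {X HB : Type*} [MeasurableSpace HB] {b : HB → X → ℝ}
  {μ : X → Measure HB} {h : ℝ}

theorem le_exp_dist_smul_of_withDensity [MetricSpace X] (hh : 0 ≤ h)
    (hblip : ∀ (η : HB) (x y : X), |b η x - b η y| ≤ dist x y)
    (hRN : ∀ p q : X, μ p = (μ q).withDensity fun η =>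
      ENNReal.ofReal (Real.exp (-h * (b η p - b η q))))
    (p q : X) : μ p ≤ ENNReal.ofReal (Real.exp (h * dist p q)) • μ q := by
  rw [hRN p q, ← withDensity_const]
  refine withDensity_mono (Eventually.of_forall fun η => ?_)
  refine ENNReal.ofReal_le_ofReal (Real.exp_le_exp.2 ?_)
  nlinarith [(abs_le.1 (hblip η p q)).1]

theorem measure_univ_le_exp_of_cocompact [MetricSpace X] {G : Type*} [Group G] [MulAction G X]
    [MulAction G HB] {o : X} {D : ℝ} [IsProbabilityMeasure (μ o)] (hh : 0 ≤ h)
    (hblip : ∀ (η : HB) (x y : X), |b η x - b η y| ≤ dist x y)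
    (hRN : ∀ p q : X, μ p = (μ q).withDensity fun η =>
      ENNReal.ofReal (Real.exp (-h * (b η p - b η q))))
    (hmeas : ∀ g : G, Measurable fun η : HB => g • η)
    (hequiv : ∀ (g : G) (x : X), μ (g • x) = Measure.map (fun η : HB => g • η) (μ x))
    (hcocompact : ∀ p : X, ∃ g : G, dist p (g • o) ≤ D) (q : X) :
    μ q Set.univ ≤ ENNReal.ofReal (Real.exp (h * D)) := by
  obtain ⟨g, hg⟩ := hcocompact q
  have hgo : μ (g • o) Set.univ = 1 := by
    rw [hequiv, Measure.map_apply (hmeas g) MeasurableSet.univ, Set.preimage_univ, measure_univ]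
  calc μ q Set.univ ≤ ENNReal.ofReal (Real.exp (h * dist q (g • o))) * μ (g • o) Set.univ :=
        Measure.le_iff'.1 (le_exp_dist_smul_of_withDensity hh hblip hRN q (g • o)) Set.univ
    _ ≤ ENNReal.ofReal (Real.exp (h * D)) := by
        rw [hgo, mul_one]
        gcongr

theorem measure_bddDist_le_exp_mul (hh : 0 ≤ h)
    (hRN : ∀ p q : X, μ p = (μ q).withDensity fun η =>
      ENNReal.ofReal (Real.exp (-h * (b η p - b η q))))
    (η₀ : HB) (C : ℝ) (p q : X) [SFinite (μ q)] :
    μ p {η | ∀ x, |b η x - b η₀ x| ≤ C} ≤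
      ENNReal.ofReal (Real.exp (h * (b η₀ q - b η₀ p + 2 * C))) *
        μ q {η | ∀ x, |b η x - b η₀ x| ≤ C} := by
  rw [hRN p q]
  refine withDensity_apply_le_mul_of_forall_le fun η hη => ?_
  refine ENNReal.ofReal_le_ofReal (Real.exp_le_exp.2 ?_)
  nlinarith [abs_le.1 (hη p), abs_le.1 (hη q)]

theorem measure_bddDist_eq_zero (hh : 0 < h)
    (hRN : ∀ p q : X, μ p = (μ q).withDensity fun η =>
      ENNReal.ofReal (Real.exp (-h * (b η p - b η q))))
    {M : ℝ≥0∞} (hM : M ≠ ⊤) (hmass : ∀ q, μ q Set.univ ≤ M)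
    {η₀ : HB} (hunbdd : ∀ t : ℝ, ∃ q : X, b η₀ q ≤ t) (C : ℝ) (p : X) :
    μ p {η | ∀ x, |b η x - b η₀ x| ≤ C} = 0 := by
  have hfin (q : X) : IsFiniteMeasure (μ q) := ⟨(hmass q).trans_lt hM.lt_top⟩
  have hle (t : ℝ) : μ p {η | ∀ x, |b η x - b η₀ x| ≤ C} ≤
      ENNReal.ofReal (Real.exp (h * (t - b η₀ p + 2 * C))) * M := by
    obtain ⟨q, hq⟩ := hunbdd t
    refine (measure_bddDist_le_exp_mul hh.le hRN η₀ C p q).trans ?_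
    gcongr
    exact (measure_mono (Set.subset_univ _)).trans (hmass q)
  have hlim : Tendsto (fun t => ENNReal.ofReal (Real.exp (h * (t - b η₀ p + 2 * C))) * M)
      atBot (𝓝 0) := by
    have hexp : Tendsto (fun t => h * (t - b η₀ p + 2 * C)) atBot atBot := by
      simp only [sub_eq_add_neg]
      exact (tendsto_atBot_add_const_right _ _
        (tendsto_atBot_add_const_right _ _ tendsto_id)).const_mul_atBot hh
    simpa using ENNReal.Tendsto.mul_const
      (ENNReal.tendsto_ofReal (Real.tendsto_exp_atBot.comp hexp)) (Or.inr hM)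
  exact le_antisymm (ge_of_tendsto' hlim hle) zero_le

end PattersonSullivan

theorem pushforward_ps_measure_no_atoms_general {X HB G : Type*} [MetricSpace X] [ProperSpace X]
    [MeasurableSpace HB] [Group G] [MulAction G X] [MulAction G HB]
    (o : X)
    (hgeo : ∀ x y : X, ∃ m : X, dist x m = dist x y / 2 ∧ dist m y = dist x y / 2)
    (h D : ℝ) (hh : 0 < h)
    (b : HB → X → ℝ)
    (hblip : ∀ (η : HB) (x y : X), |b η x - b η y| ≤ dist x y)
    (hhoro : ∀ η : HB, ∃ p : ℕ → X,
      Tendsto (fun n => dist (p n) o) atTop atTop ∧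
      ∀ x : X, Tendsto (fun n => dist (p n) x - dist (p n) o) atTop (nhds (b η x)))
    (μ : X → Measure HB)
    (hRN : ∀ p q : X, μ p = (μ q).withDensity fun η =>
      ENNReal.ofReal (Real.exp (-h * (b η p - b η q))))
    (hprob : IsProbabilityMeasure (μ o))
    (hmeas : ∀ g : G, Measurable fun η : HB => g • η)
    (hequiv : ∀ (g : G) (x : X), μ (g • x) = Measure.map (fun η : HB => g • η) (μ x))
    (hcocompact : ∀ p : X, ∃ g : G, dist p (g • o) ≤ D) :
    ∀ (p : X) (η₀ : HB), μ p {η : HB | ∃ C : ℝ, ∀ x : X, |b η x - b η₀ x| ≤ C} = 0 := by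
  intro p η₀
  obtain ⟨seq, hseq, hlim⟩ := hhoro η₀
  have hmass := measure_univ_le_exp_of_cocompact hh.le hblip hRN hmeas hequiv hcocompact
  have hpiece (C : ℕ) : μ p {η | ∀ x, |b η x - b η₀ x| ≤ C} = 0 :=
    measure_bddDist_eq_zero hh hRN ENNReal.ofReal_ne_top hmass
      (exists_le_of_tendsto_dist_sub_dist hgeo hseq hlim) C p
  refine measure_mono_null ?_ (measure_iUnion_null hpiece)
  rintro η ⟨C, hC⟩
  exact Set.mem_iUnion.2 ⟨⌈C⌉₊, fun x => (hC x).trans (Nat.le_ceil C)⟩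

/-- Let `X` be a proper geodesic `δ`-hyperbolic space admitting a cocompact isometric action
of a group `G`, with Patterson–Sullivan density `μ` of dimension `h > 0` on the horoboundary
`HB` (whose points `η` are given by normalized horofunctions `b η`, i.e. `1`-Lipschitz limits
of `d(pₙ, ·) − d(pₙ, o)`), and let `π : HB → ∂X` be the natural equivariant projection to the
Gromov boundary — two horofunctions project to the same boundary point exactly when they
differ by a bounded amount.  Then the pushforward measures `π_* (μ p)` have no atoms: every
fiber of `π` has `μ p`-measure zero. -/
theorem pushforward_ps_measure_no_atoms {X HB G : Type*} [MetricSpace X] [ProperSpace X]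
    [MeasurableSpace HB] [Group G] [MulAction G X] [MulAction G HB]
    (hiso : ∀ (g : G) (x y : X), dist (g • x) (g • y) = dist x y)
    (o : X) (δ : ℝ) (hδ : 0 ≤ δ)
    (hhyp : ∀ x y z : X, min (gromovProd o x z) (gromovProd o z y) - δ ≤ gromovProd o x y)
    (hgeo : ∀ x y : X, ∃ m : X, dist x m = dist x y / 2 ∧ dist m y = dist x y / 2)
    (h D : ℝ) (hh : 0 < h) (hD : 0 ≤ D)
    (b : HB → X → ℝ)
    (hblip : ∀ (η : HB) (x y : X), |b η x - b η y| ≤ dist x y)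
    (hbo : ∀ η : HB, b η o = 0)
    (hhoro : ∀ η : HB, ∃ p : ℕ → X,
      Tendsto (fun n => dist (p n) o) atTop atTop ∧
      ∀ x : X, Tendsto (fun n => dist (p n) x - dist (p n) o) atTop (nhds (b η x)))
    (hbG : ∀ (g : G) (η : HB) (x : X), b (g • η) x = b η (g⁻¹ • x) - b η (g⁻¹ • o))
    (μ : X → Measure HB)
    (hRN : ∀ p q : X, μ p = (μ q).withDensity fun η =>
      ENNReal.ofReal (Real.exp (-h * (b η p - b η q))))
    (hprob : IsProbabilityMeasure (μ o))
    (hmeas : ∀ g : G, Measurable fun η : HB => g • η)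
    (hequiv : ∀ (g : G) (x : X), μ (g • x) = Measure.map (fun η : HB => g • η) (μ x))
    (hcocompact : ∀ p : X, ∃ g : G, dist p (g • o) ≤ D) :
    ∀ (p : X) (η₀ : HB), μ p {η : HB | ∃ C : ℝ, ∀ x : X, |b η x - b η₀ x| ≤ C} = 0 :=
  pushforward_ps_measure_no_atoms_general o hgeo h D hh b hblip hhoro μ hRN hprob hmeas hequiv
    hcocompact
end
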